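/- Let M be the subalgebra of UT_8(F) described below, closed under the reflection involution θ_8. The center of M is Z(M) = F·e_{18}, and [x_1^+,x_2^+][x_3^+,x_4^+][x_5^+,x_6^+][x_7^+,x_8^+] is a proper central *-polynomial for (M, θ_8): every such product of four commutators of θ_8-symmetric elements lies in F·e_{18}, and the evaluation at the symmetric elements e_{12}+e_{78}, e_{22}+e_{77}, e_{22}+e_{77}, e_{23}+e_{67}, e_{33}+e_{66}, e_{34}+e_{56}, e_{44}+e_{55}, e_{48}+e_{14} equals e_{18} ≠ 0. -/

import Mathlib

open Matrix

/-- The reflection involution `θ_8` on `M_8(F)`. -/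
def reflInv {F : Type*} [Field F] (A : Matrix (Fin 8) (Fin 8) F) :
    Matrix (Fin 8) (Fin 8) F :=
  Matrix.of fun i j => A j.rev i.rev

/-- Membership in the algebra `M ⊆ UT_8(F)`: upper triangular with
`X₁₁ = X₈₈ = 0`, `X₂₂ = X₇₇`, `X₃₃ = X₆₆`, `X₄₄ = X₅₅` (1-indexed), and zero
entries in positions `(i,j)` for `i ∈ {2,3,4}`, `j ∈ {5,6,7}`. -/
def memM {F : Type*} [Field F] (X : Matrix (Fin 8) (Fin 8) F) : Prop :=
  (∀ i j : Fin 8, j < i → X i j = 0) ∧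
  X 0 0 = 0 ∧ X 7 7 = 0 ∧ X 1 1 = X 6 6 ∧ X 2 2 = X 5 5 ∧ X 3 3 = X 4 4 ∧
  X 1 4 = 0 ∧ X 1 5 = 0 ∧ X 1 6 = 0 ∧
  X 2 4 = 0 ∧ X 2 5 = 0 ∧ X 2 6 = 0 ∧
  X 3 4 = 0 ∧ X 3 5 = 0 ∧ X 3 6 = 0

/-- The matrix unit `e_{ij}` in `M_8(F)` (1-indexed positions shifted to `Fin 8`). -/
def e {F : Type*} [Field F] (i j : Fin 8) : Matrix (Fin 8) (Fin 8) F :=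
  Matrix.single i j 1

/-!
Give each index its position along the two chains `1 → 2 → 3 → 4 → 8` and
`1 → 5 → 6 → 7 → 8` of positions of `M` as a degree. Every off-diagonal entry of an element of
`M` strictly raises the degree, so the degree-preserving part of `XY` is the product of the
diagonals, which commute; hence a commutator of two elements of `M` raises the degree by at least
one. A product of four commutators raises it by four, which only the position `(1, 8)` does. For the center, commuting with the matrix
units `e_{1j}` and `e_{i8}` of `M` kills every entry of a central element except `X₁₈`.
-/

namespace Matrix

variable {n R : Type*} [Fintype n]

def IsDegreeRaising [Zero R] (d : n → ℕ) (m : ℕ) (A : Matrix n n R) : Prop :=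
  ∀ i j, A i j ≠ 0 → d i + m ≤ d j

theorem IsDegreeRaising.mul [NonUnitalNonAssocSemiring R] {d : n → ℕ} {m k : ℕ}
    {A B : Matrix n n R} (hA : IsDegreeRaising d m A) (hB : IsDegreeRaising d k B) :
    IsDegreeRaising d (m + k) (A * B) := by
  intro i j hAB
  obtain ⟨l, -, hl⟩ := Finset.exists_ne_zero_of_sum_ne_zero hAB
  have := hA i l (left_ne_zero_of_mul hl)
  have := hB l j (right_ne_zero_of_mul hl)
  omega

def IsDegreeRaisingOffDiag [Zero R] (d : n → ℕ) (A : Matrix n n R) : Prop :=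
  ∀ i j, i ≠ j → A i j ≠ 0 → d i < d j

theorem IsDegreeRaisingOffDiag.mul_apply_of_not_lt [NonUnitalNonAssocSemiring R] {d : n → ℕ}
    {A B : Matrix n n R} (hA : IsDegreeRaisingOffDiag d A) (hB : IsDegreeRaisingOffDiag d B)
    {i j : n} (hij : ¬d i < d j) : (A * B) i j = A i j * B j j := by
  refine Finset.sum_eq_single j (fun k _ hkj => ?_) (by simp)
  by_contra h
  have hkj' := hB k j hkj (right_ne_zero_of_mul h)
  by_cases hik : i = k
  · subst hik; omega
  · have := hA i k hik (left_ne_zero_of_mul h); omega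

theorem IsDegreeRaisingOffDiag.isDegreeRaising_one_mul_sub_mul [CommRing R]
    {d : n → ℕ} {X Y : Matrix n n R} (hX : IsDegreeRaisingOffDiag d X)
    (hY : IsDegreeRaisingOffDiag d Y) : IsDegreeRaising d 1 (X * Y - Y * X) := by
  intro i j hne
  by_contra hlt
  rw [sub_apply, hX.mul_apply_of_not_lt hY hlt, hY.mul_apply_of_not_lt hX hlt] at hne
  by_cases hij : i = j
  · subst hij; exact hne (by ring)
  · have hX0 : X i j = 0 := by_contra fun h => hlt (hX i j hij h)
    have hY0 : Y i j = 0 := by_contra fun h => hlt (hY i j hij h)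
    simp [hX0, hY0] at hne

end Matrix

section

variable {F : Type*} [Field F]

-- 0-indexed: position along the chains `0 → 1 → 2 → 3 → 7` and `0 → 4 → 5 → 6 → 7`.
def degreeM : Fin 8 → ℕ := ![0, 1, 2, 3, 1, 2, 3, 4]

theorem memM.isDegreeRaisingOffDiag {X : Matrix (Fin 8) (Fin 8) F} (hX : memM X) :
    IsDegreeRaisingOffDiag degreeM X := by
  obtain ⟨ht, h00, h77, -, -, -, z14, -, -, z24, z25, -, z34, z35, z36⟩ := hX
  intro i j hij hXij
  by_contra hlt
  apply hXij
  fin_cases i <;> fin_cases j <;> simp [degreeM] at hij hlt ⊢ <;>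
    first | assumption | exact ht _ _ (by decide)

theorem degreeM_add_four_le {i j : Fin 8} (h : degreeM i + 4 ≤ degreeM j) : i = 0 ∧ j = 7 := by
  revert i j; decide

theorem memM.isDegreeRaising_commutator {X Y : Matrix (Fin 8) (Fin 8) F}
    (hX : memM X) (hY : memM Y) : IsDegreeRaising degreeM 1 (X * Y - Y * X) :=
  hX.isDegreeRaisingOffDiag.isDegreeRaising_one_mul_sub_mul hY.isDegreeRaisingOffDiag

theorem e_apply (i j a b : Fin 8) :
    (e i j : Matrix (Fin 8) (Fin 8) F) a b = if i = a ∧ j = b then 1 else 0 := rfl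

theorem eq_smul_e_of_isDegreeRaising_four {P : Matrix (Fin 8) (Fin 8) F}
    (hP : IsDegreeRaising degreeM 4 P) : P = P 0 7 • e 0 7 := by
  ext i j
  by_cases h : i = 0 ∧ j = 7
  · obtain ⟨rfl, rfl⟩ := h; simp [e]
  · rw [Matrix.smul_apply, e_apply, if_neg fun ⟨hi, hj⟩ => h ⟨hi.symm, hj.symm⟩, smul_zero]
    exact by_contra fun hne => h (degreeM_add_four_le (hP i j hne))

theorem memM_reflInv {X : Matrix (Fin 8) (Fin 8) F} (hX : memM X) :
    memM (reflInv X) :=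
  let ⟨ht, h00, h77, h16, h25, h34, z14, z15, z16, z24, z25, z26, z34, z35, z36⟩ := hX
  ⟨fun _ _ h => ht _ _ (Fin.rev_lt_rev.mpr h), h77, h00, h16.symm, h25.symm, h34.symm,
    z36, z26, z16, z35, z25, z15, z34, z24, z14⟩

theorem memM_e {i j : Fin 8} (hij : i ≠ j) (h : i = 0 ∨ j = 7) :
    memM (e i j : Matrix (Fin 8) (Fin 8) F) := by
  refine ⟨fun a b hab => if_neg ?_, ?_⟩
  · rintro ⟨rfl, rfl⟩
    rcases h with rfl | rfl
    · exact Fin.not_lt_zero _ hab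
    · exact not_lt_of_ge (Fin.le_last _) hab
  · rcases h with rfl | rfl <;> simp [e_apply, hij, hij.symm]

theorem memM.row_seven_eq_zero {Y : Matrix (Fin 8) (Fin 8) F}
    (hY : memM Y) (b : Fin 8) : Y 7 b = 0 := by
  rcases (Fin.le_last b).lt_or_eq with hb | rfl
  · exact hY.1 7 b hb
  · exact hY.2.2.1

theorem memM.col_zero_eq_zero {Y : Matrix (Fin 8) (Fin 8) F}
    (hY : memM Y) (a : Fin 8) : Y a 0 = 0 := by
  rcases (Fin.zero_le a).lt_or_eq with ha | rfl
  · exact hY.1 a 0 ha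
  · exact hY.2.1

theorem e_zero_seven_mul_eq_zero {Y : Matrix (Fin 8) (Fin 8) F}
    (hY : memM Y) : e 0 7 * Y = 0 := by
  ext a b
  by_cases ha : a = 0
  · rw [ha, e, single_mul_apply_same, hY.row_seven_eq_zero, mul_zero, Matrix.zero_apply]
  · rw [e, single_mul_apply_of_ne _ _ _ _ _ ha, Matrix.zero_apply]

theorem mul_e_zero_seven_eq_zero {Y : Matrix (Fin 8) (Fin 8) F}
    (hY : memM Y) : Y * e 0 7 = 0 := by
  ext a b
  by_cases hb : b = 7
  · rw [hb, e, mul_single_apply_same, hY.col_zero_eq_zero, zero_mul, Matrix.zero_apply]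
  · rw [e, mul_single_apply_of_ne _ _ _ _ _ hb, Matrix.zero_apply]

theorem eq_smul_e_of_forall_commute {X : Matrix (Fin 8) (Fin 8) F}
    (hX : memM X) (hc : ∀ Y, memM Y → X * Y = Y * X) : X = X 0 7 • e 0 7 := by
  have hcomm : ∀ i j : Fin 8, i ≠ j → (i = 0 ∨ j = 7) → Commute (single i j 1) X :=
    fun i j hij h => (hc _ (memM_e hij h)).symm
  ext a b
  rw [Matrix.smul_apply, e_apply]
  by_cases hb : b = 7
  · subst hb
    by_cases ha : a = 0
    · simp [ha]
    rw [if_neg fun h => ha h.1.symm, smul_zero]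
    by_cases ha7 : a = 7
    · rw [ha7]; exact hX.2.2.1
    · exact row_eq_zero_of_commute_single (hcomm 0 a (Ne.symm ha) (.inl rfl)) (Ne.symm ha7)
  · rw [if_neg fun h => hb h.2.symm, smul_zero]
    by_cases hab : a = b
    · rw [hab, diag_eq_of_commute_single (hcomm b 7 hb (.inr rfl))]; exact hX.2.2.1
    · exact col_eq_zero_of_commute_single (hcomm b 7 hb (.inr rfl)) hab

theorem memM_forall_commute_iff {X : Matrix (Fin 8) (Fin 8) F}
    (hX : memM X) : (∀ Y, memM Y → X * Y = Y * X) ↔ ∃ c : F, X = c • e 0 7 := by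
  refine ⟨fun hc => ⟨X 0 7, eq_smul_e_of_forall_commute hX hc⟩, ?_⟩
  rintro ⟨c, rfl⟩ Y hY
  rw [Matrix.smul_mul, Matrix.mul_smul, e_zero_seven_mul_eq_zero hY, mul_e_zero_seven_eq_zero hY]

end

theorem stmt_14_general (F : Type*) [Field F] :
    (∀ X : Matrix (Fin 8) (Fin 8) F, memM X → memM (reflInv X)) ∧
    (∀ X : Matrix (Fin 8) (Fin 8) F, memM X →
      ((∀ Y : Matrix (Fin 8) (Fin 8) F, memM Y → X * Y = Y * X) ↔
        ∃ c : F, X = c • (e 0 7))) ∧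
    (∀ A₁ A₂ A₃ A₄ A₅ A₆ A₇ A₈ : Matrix (Fin 8) (Fin 8) F,
      memM A₁ → memM A₂ → memM A₃ → memM A₄ → memM A₅ → memM A₆ → memM A₇ → memM A₈ →
      reflInv A₁ = A₁ → reflInv A₂ = A₂ → reflInv A₃ = A₃ → reflInv A₄ = A₄ →
      reflInv A₅ = A₅ → reflInv A₆ = A₆ → reflInv A₇ = A₇ → reflInv A₈ = A₈ →
      ∃ c : F, (A₁ * A₂ - A₂ * A₁) * (A₃ * A₄ - A₄ * A₃) *
        (A₅ * A₆ - A₆ * A₅) * (A₇ * A₈ - A₈ * A₇) = c • (e 0 7)) ∧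
    (((e 0 1 + e 6 7) * (e 1 1 + e 6 6) - (e 1 1 + e 6 6) * (e 0 1 + e 6 7)) *
      ((e 1 1 + e 6 6) * (e 1 2 + e 5 6) - (e 1 2 + e 5 6) * (e 1 1 + e 6 6)) *
      ((e 2 2 + e 5 5) * (e 2 3 + e 4 5) - (e 2 3 + e 4 5) * (e 2 2 + e 5 5)) *
      ((e 3 3 + e 4 4) * (e 3 7 + e 0 3) - (e 3 7 + e 0 3) * (e 3 3 + e 4 4)) =
        (e 0 7 : Matrix (Fin 8) (Fin 8) F)) ∧
    (e 0 7 : Matrix (Fin 8) (Fin 8) F) ≠ 0 := by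
  refine ⟨fun _ => memM_reflInv, fun _ => memM_forall_commute_iff, ?_, ?_, ?_⟩
  · intro A₁ A₂ A₃ A₄ A₅ A₆ A₇ A₈ h₁ h₂ h₃ h₄ h₅ h₆ h₇ h₈ _ _ _ _ _ _ _ _
    have hP : IsDegreeRaising degreeM 4 _ :=
      (((h₁.isDegreeRaising_commutator h₂).mul (h₃.isDegreeRaising_commutator h₄)).mul
        (h₅.isDegreeRaising_commutator h₆)).mul (h₇.isDegreeRaising_commutator h₈)
    exact ⟨_, eq_smul_e_of_isDegreeRaising_four hP⟩
  · simp [e, mul_sub, sub_mul, mul_add, add_mul, single_mul_single_of_ne]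
  · intro h
    simpa [e_apply] using congrFun₂ h 0 7

/-- `Z(M) = F·e_{18}` and `[x₁⁺,x₂⁺][x₃⁺,x₄⁺][x₅⁺,x₆⁺][x₇⁺,x₈⁺]` is a
proper central `*`-polynomial for `(M, θ_8)`, with the given explicit evaluation
equal to `e_{18} ≠ 0`. -/
theorem stmt_14 (F : Type*) [Field F] [CharZero F] :
    (∀ X : Matrix (Fin 8) (Fin 8) F, memM X → memM (reflInv X)) ∧
    (∀ X : Matrix (Fin 8) (Fin 8) F, memM X →
      ((∀ Y : Matrix (Fin 8) (Fin 8) F, memM Y → X * Y = Y * X) ↔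
        ∃ c : F, X = c • (e 0 7))) ∧
    (∀ A₁ A₂ A₃ A₄ A₅ A₆ A₇ A₈ : Matrix (Fin 8) (Fin 8) F,
      memM A₁ → memM A₂ → memM A₃ → memM A₄ → memM A₅ → memM A₆ → memM A₇ → memM A₈ →
      reflInv A₁ = A₁ → reflInv A₂ = A₂ → reflInv A₃ = A₃ → reflInv A₄ = A₄ →
      reflInv A₅ = A₅ → reflInv A₆ = A₆ → reflInv A₇ = A₇ → reflInv A₈ = A₈ →
      ∃ c : F, (A₁ * A₂ - A₂ * A₁) * (A₃ * A₄ - A₄ * A₃) *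
        (A₅ * A₆ - A₆ * A₅) * (A₇ * A₈ - A₈ * A₇) = c • (e 0 7)) ∧
    (((e 0 1 + e 6 7) * (e 1 1 + e 6 6) - (e 1 1 + e 6 6) * (e 0 1 + e 6 7)) *
      ((e 1 1 + e 6 6) * (e 1 2 + e 5 6) - (e 1 2 + e 5 6) * (e 1 1 + e 6 6)) *
      ((e 2 2 + e 5 5) * (e 2 3 + e 4 5) - (e 2 3 + e 4 5) * (e 2 2 + e 5 5)) *
      ((e 3 3 + e 4 4) * (e 3 7 + e 0 3) - (e 3 7 + e 0 3) * (e 3 3 + e 4 4)) =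
        (e 0 7 : Matrix (Fin 8) (Fin 8) F)) ∧
    (e 0 7 : Matrix (Fin 8) (Fin 8) F) ≠ 0 :=
  stmt_14_general F
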